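/- arXiv:2304.12834 — 3 statements merged into one kernel-verified Lean document; each statement's English description precedes it below -/
import Mathlib

section
/- Assume (A2)–(A3) for some t₀ > 0, the ground state data with the spectral-gap kernel estimate, and Z(t₁) < ∞ for some t₁ ≥ t₀. Then m is a quasi-stationary measure of {U_t}, and it is unique in the following sense: if m̄ is any quasi-stationary probability measure of {U_t} with m̄(φ₀) > 0, then m̄ = m. Analogously, m* is the unique quasi-stationary probability measure of {U_t*} among those m̄ with m̄(ψ₀) > 0. -/
open MeasureTheory Real Set Filter Topology
open scoped ENNReal NNReal

noncomputable section

variable {M : Type*}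

/-- The integral operator `U_t` associated with the kernel `u`:
`U_t f (x) = ∫ u_t(x,y) f(y) μ(dy)`. -/
def Uop [MeasurableSpace M] (μ : Measure M) (u : ℝ → M → M → ℝ)
    (t : ℝ) (f : M → ℝ) (x : M) : ℝ :=
  ∫ y, u t x y * f y ∂μ

/-- The adjoint integral operator `U_t^*`:
`U_t^* g (y) = ∫ u_t(x,y) g(x) μ(dx)`. -/
def Ustar [MeasurableSpace M] (μ : Measure M) (u : ℝ → M → M → ℝ)
    (t : ℝ) (g : M → ℝ) (y : M) : ℝ :=
  ∫ x, u t x y * g x ∂μ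

/-- The heat content `Z(t) = ∬ u_t(x,y) μ(dx) μ(dy)`. -/
def heatContent [MeasurableSpace M] (μ : Measure M) (u : ℝ → M → M → ℝ) (t : ℝ) : ℝ≥0∞ :=
  ∫⁻ x, ∫⁻ y, ENNReal.ofReal (u t x y) ∂μ ∂μ

/-- An exhausting family of compact sets `{K_t : t ≥ t₀}`. -/
def ExhaustingFamily [TopologicalSpace M] (t₀ : ℝ) (K : ℝ → Set M) : Prop :=
  (∀ t, t₀ ≤ t → IsCompact (K t)) ∧
  (∀ s t, t₀ ≤ s → s < t → K s ⊆ K t) ∧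
  (⋃ t ∈ Set.Ici t₀, K t) = Set.univ ∧
  (∀ A : Set M, IsCompact A → ∃ t, t₀ ≤ t ∧ A ⊆ K t)

/-- `m̄` is a quasi-stationary (probability) measure of the semigroup `{U_t}`:
for every `t > 0` and every bounded Borel `f`, `m̄(U_t 1) > 0` and
`m̄(U_t f)/m̄(U_t 1) = m̄(f)`. -/
def IsQSM [MeasurableSpace M] (μ : Measure M) (u : ℝ → M → M → ℝ) (mb : Measure M) : Prop :=
  ∀ t : ℝ, 0 < t → ∀ f : M → ℝ, Measurable f → (∃ C, ∀ x, |f x| ≤ C) →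
    0 < (∫ x, Uop μ u t (fun _ => (1 : ℝ)) x ∂mb) ∧
    (∫ x, Uop μ u t f x ∂mb) / (∫ x, Uop μ u t (fun _ => (1 : ℝ)) x ∂mb) = ∫ x, f x ∂mb

/-- Quasi-stationarity for the adjoint semigroup `{U_t^*}`. -/
def IsQSMstar [MeasurableSpace M] (μ : Measure M) (u : ℝ → M → M → ℝ) (mb : Measure M) : Prop :=
  ∀ t : ℝ, 0 < t → ∀ f : M → ℝ, Measurable f → (∃ C, ∀ x, |f x| ≤ C) →
    0 < (∫ x, Ustar μ u t (fun _ => (1 : ℝ)) x ∂mb) ∧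
    (∫ x, Ustar μ u t f x ∂mb) / (∫ x, Ustar μ u t (fun _ => (1 : ℝ)) x ∂mb) = ∫ x, f x ∂mb

/-!
`ψ₀` is a left eigenfunction, so Fubini gives `∫ ψ₀ · U_t f dμ = e^{-λ₀ t} ∫ ψ₀ f dμ`; after
normalisation this is quasi-stationarity of `m`. For uniqueness write `U_{s+t₁} f = U_s g` with
`g = U_{t₁} f`, which lies in `L¹(μ)` because `Z(t₁) < ∞`. Integrating the spectral-gap estimate at
time `s` against `g` shows `e^{λ₀ s} U_{s+t₁} f → Λ⁻¹ (∫ ψ₀ g dμ) φ₀` uniformly on `M`: first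
`μ`-a.e., then everywhere by continuity and full support, which is what an arbitrary `m̄` can see.
Integrating against a quasi-stationary `m̄` and dividing the limits for `f` and for `1` gives
`m̄(f) = m(f)` as soon as `m̄(φ₀) > 0`. The adjoint statement is the same argument for the
transposed kernel.
-/

open Function

theorem integral_pos_of_ae_pos [MeasurableSpace M] {μ : Measure M} {f : M → ℝ} (hμ : μ ≠ 0)
    (hf : ∀ᵐ x ∂μ, 0 < f x) (hfi : Integrable f μ) : 0 < ∫ x, f x ∂μ := by
  rw [integral_pos_iff_support_of_nonneg_ae (hf.mono fun x hx => hx.le) hfi]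
  exact (Measure.measure_univ_pos.2 hμ).trans_le
    (measure_mono_ae (hf.mono fun x hx _ => hx.ne' : (univ : Set M) ≤ᵐ[μ] support f))

theorem Continuous.forall_abs_le_of_ae [TopologicalSpace M] [MeasurableSpace M]
    {μ : Measure M} [μ.IsOpenPosMeasure] {F : M → ℝ} {C : ℝ} (hF : Continuous F)
    (h : ∀ᵐ x ∂μ, |F x| ≤ C) (x : M) : |F x| ≤ C := by
  have hempty : {x | C < |F x|} = ∅ :=
    ((isOpen_lt continuous_const hF.abs).measure_eq_zero_iff μ).1
      (by simpa only [not_le] using ae_iff.1 h)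
  exact not_lt.1 fun hx => (Set.eq_empty_iff_forall_notMem.1 hempty x) hx

theorem abs_integral_mul_sub_integral_mul_le [MeasurableSpace M] {μ : Measure M}
    {k ℓ g : M → ℝ} {B δ : ℝ} (hk : AEStronglyMeasurable k μ) (hℓ : AEStronglyMeasurable ℓ μ)
    (hℓB : ∀ᵐ z ∂μ, |ℓ z| ≤ B) (hkℓ : ∀ᵐ z ∂μ, |k z - ℓ z| ≤ δ) (hg : Integrable g μ) :
    |∫ z, k z * g z ∂μ - ∫ z, ℓ z * g z ∂μ| ≤ δ * ∫ z, |g z| ∂μ := by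
  have hkB : ∀ᵐ z ∂μ, ‖k z‖ ≤ B + δ := by
    filter_upwards [hℓB, hkℓ] with z hℓz hkℓz
    have := abs_sub_abs_le_abs_sub (k z) (ℓ z)
    rw [Real.norm_eq_abs]
    linarith
  rw [← integral_sub (hg.bdd_mul hk hkB) (hg.bdd_mul hℓ hℓB)]
  refine (norm_integral_le_of_norm_le (G := ℝ) (hg.abs.const_mul δ) ?_).trans_eq
    (integral_const_mul δ fun z => |g z|)
  filter_upwards [hkℓ] with z hz
  rw [← sub_mul, norm_mul, Real.norm_eq_abs, Real.norm_eq_abs]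
  exact mul_le_mul_of_nonneg_right hz (abs_nonneg _)

theorem tendsto_integral_of_eventually_abs_sub_le {ι : Type*} {l : Filter ι} [MeasurableSpace M]
    {ν : Measure M} [IsFiniteMeasure ν] {F : ι → M → ℝ} {G : M → ℝ} {δ : ι → ℝ}
    (hF : ∀ᶠ i in l, Integrable (F i) ν) (hG : Integrable G ν) (hδ : Tendsto δ l (𝓝 0))
    (h : ∀ᶠ i in l, ∀ x, |F i x - G x| ≤ δ i) :
    Tendsto (fun i => ∫ x, F i x ∂ν) l (𝓝 (∫ x, G x ∂ν)) := by
  have hδν : Tendsto (fun i => δ i * ν.real univ) l (𝓝 0) := by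
    simpa using hδ.mul_const (ν.real univ)
  refine tendsto_iff_norm_sub_tendsto_zero.2 (squeeze_zero_norm' ?_ hδν)
  filter_upwards [hF, h] with i hFi hi
  rw [norm_norm, ← integral_sub hFi hG]
  exact norm_integral_le_of_norm_le_const (ae_of_all _ hi)

section Kernel

variable [MeasurableSpace M] {μ : Measure M} [SFinite μ] {u : ℝ → M → M → ℝ} {t : ℝ}

theorem integrable_uncurry_of_heatContent_lt_top (hu0 : ∀ x y, 0 ≤ u t x y)
    (hu : Measurable (uncurry (u t))) (hZ : heatContent μ u t < ⊤) :
    Integrable (uncurry (u t)) (μ.prod μ) := by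
  refine ⟨hu.aestronglyMeasurable, (hasFiniteIntegral_iff_ofReal
    (ae_of_all _ fun p : M × M => hu0 p.1 p.2)).2 ?_⟩
  rwa [lintegral_prod (fun p : M × M => ENNReal.ofReal (u t p.1 p.2))
    hu.ennreal_ofReal.aemeasurable]

theorem integrable_Uop (hu : Integrable (uncurry (u t)) (μ.prod μ)) {f : M → ℝ} {C : ℝ}
    (hf : Measurable f) (hfC : ∀ x, |f x| ≤ C) : Integrable (Uop μ u t f) μ :=
  (hu.mul_bdd (hf.comp measurable_snd).aestronglyMeasurable
    (ae_of_all _ fun p => hfC p.2)).integral_prod_left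

theorem integrable_Ustar (hu : Integrable (uncurry (u t)) (μ.prod μ)) {f : M → ℝ} {C : ℝ}
    (hf : Measurable f) (hfC : ∀ x, |f x| ≤ C) : Integrable (Ustar μ u t f) μ :=
  (hu.mul_bdd (hf.comp measurable_fst).aestronglyMeasurable
    (ae_of_all _ fun p => hfC p.1)).integral_prod_right

theorem integrable_of_Ustar_eq_smul (hu : Integrable (uncurry (u t)) (μ.prod μ)) {ψ : M → ℝ}
    {C c : ℝ} (hψ : Measurable ψ) (hψC : ∀ x, |ψ x| ≤ C) (hc : c ≠ 0)
    (heig : ∀ y, Ustar μ u t ψ y = c * ψ y) : Integrable ψ μ :=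
  ((integrable_Ustar hu hψ hψC).const_mul c⁻¹).congr
    (ae_of_all _ fun y => by simp only [heig, inv_mul_cancel_left₀ hc])

/-- Integrability in `x` for a.e. `y` comes for free: where `ψ y > 0` the integral defining
`Ustar μ u t ψ y = c * ψ y` is nonzero, so it is not the junk value `0`. -/
theorem integrable_prod_of_Ustar_eq_smul (hu0 : ∀ x y, 0 ≤ u t x y)
    (hu : Measurable (uncurry (u t))) {ψ : M → ℝ} {c : ℝ} (hψ : Measurable ψ)
    (hψpos : ∀ᵐ x ∂μ, 0 < ψ x) (hψi : Integrable ψ μ) (hc : c ≠ 0)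
    (heig : ∀ y, Ustar μ u t ψ y = c * ψ y) :
    Integrable (fun p : M × M => ψ p.1 * u t p.1 p.2) (μ.prod μ) := by
  refine (integrable_prod_iff' ((hψ.comp measurable_fst).mul hu).aestronglyMeasurable).2
    ⟨?_, (hψi.const_mul c).congr (ae_of_all _ fun y => ?_)⟩
  · filter_upwards [hψpos] with y hy
    by_contra hni
    have h0 : Ustar μ u t ψ y = 0 := integral_undef fun hi => hni (by simpa [mul_comm] using hi)
    exact mul_ne_zero hc hy.ne' (heig y ▸ h0)
  · show c * ψ y = ∫ x, ‖ψ x * u t x y‖ ∂μ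
    rw [← heig, Ustar]
    refine integral_congr_ae (hψpos.mono fun x hx => ?_)
    simp only [Real.norm_of_nonneg (mul_nonneg hx.le (hu0 x y)), mul_comm (u t x y)]

theorem integral_mul_Uop_eq_integral_Ustar_mul {ψ f : M → ℝ} {C : ℝ}
    (hψu : Integrable (fun p : M × M => ψ p.1 * u t p.1 p.2) (μ.prod μ))
    (hf : Measurable f) (hfC : ∀ x, |f x| ≤ C) :
    ∫ x, ψ x * Uop μ u t f x ∂μ = ∫ y, Ustar μ u t ψ y * f y ∂μ := by
  have hF := hψu.mul_bdd (hf.comp measurable_snd).aestronglyMeasurable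
    (ae_of_all _ fun p => hfC p.2)
  calc ∫ x, ψ x * Uop μ u t f x ∂μ = ∫ x, ∫ y, ψ x * u t x y * f y ∂μ ∂μ := by
        simp only [Uop, ← integral_const_mul, mul_assoc]
    _ = ∫ y, ∫ x, ψ x * u t x y * f y ∂μ ∂μ := integral_integral_swap hF
    _ = ∫ y, Ustar μ u t ψ y * f y ∂μ := by
        simp only [Ustar, ← integral_mul_const, mul_comm (ψ _)]

end Kernel

section NormalizedDensity

variable [MeasurableSpace M] {μ : Measure M} {ψ : M → ℝ}

def normalizedWithDensity (μ : Measure M) (ψ : M → ℝ) : Measure M :=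
  (∫⁻ x, ENNReal.ofReal (ψ x) ∂μ)⁻¹ • μ.withDensity fun x => ENNReal.ofReal (ψ x)

theorem integral_normalizedWithDensity (hψ0 : 0 ≤ᵐ[μ] ψ) (hψ : Integrable ψ μ) (g : M → ℝ) :
    ∫ x, g x ∂normalizedWithDensity μ ψ = (∫ x, ψ x ∂μ)⁻¹ * ∫ x, ψ x * g x ∂μ := by
  rw [normalizedWithDensity, integral_smul_measure,
    integral_withDensity_eq_integral_toReal_smul₀ hψ.aemeasurable.ennreal_ofReal
      (ae_of_all _ fun _ => ENNReal.ofReal_lt_top),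
    ← ofReal_integral_eq_lintegral_ofReal hψ hψ0, ENNReal.toReal_inv,
    ENNReal.toReal_ofReal (integral_nonneg_of_ae hψ0), smul_eq_mul]
  congr 1
  exact integral_congr_ae (hψ0.mono fun x hx => by simp [ENNReal.toReal_ofReal hx])

theorem isProbabilityMeasure_normalizedWithDensity (hψ0 : 0 ≤ᵐ[μ] ψ) (hψ : Integrable ψ μ)
    (hψpos : 0 < ∫ x, ψ x ∂μ) : IsProbabilityMeasure (normalizedWithDensity μ ψ) := by
  constructor
  rw [normalizedWithDensity, Measure.smul_apply, withDensity_apply _ MeasurableSet.univ,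
    Measure.restrict_univ, ← ofReal_integral_eq_lintegral_ofReal hψ hψ0, smul_eq_mul]
  exact ENNReal.inv_mul_cancel (ENNReal.ofReal_pos.2 hψpos).ne' ENNReal.ofReal_ne_top

theorem isQSM_normalizedWithDensity {u : ℝ → M → M → ℝ} (hψ0 : 0 ≤ᵐ[μ] ψ)
    (hψ : Integrable ψ μ) (hψpos : 0 < ∫ x, ψ x ∂μ) {c : ℝ → ℝ} (hc : ∀ t, 0 < t → 0 < c t)
    (hdual : ∀ t, 0 < t → ∀ f : M → ℝ, Measurable f → (∃ C, ∀ x, |f x| ≤ C) →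
      ∫ x, ψ x * Uop μ u t f x ∂μ = c t * ∫ x, ψ x * f x ∂μ) :
    IsQSM μ u (normalizedWithDensity μ ψ) := by
  intro t ht f hf hfC
  have hc0 := hc t ht
  simp only [integral_normalizedWithDensity hψ0 hψ, hdual t ht f hf hfC,
    hdual t ht _ measurable_const ⟨1, fun _ => abs_one.le⟩, mul_one]
  refine ⟨by positivity, by field_simp⟩

end NormalizedDensity

section GapEstimate

variable [MeasurableSpace M] {μ : Measure M} [SFinite μ] {u : ℝ → M → M → ℝ} {lam a : ℝ}
  {φ ψ : M → ℝ}

theorem ae_exists_ae_abs_le_of_gap {s δ Cψ : ℝ} (hψC : ∀ z, |ψ z| ≤ Cψ)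
    (hgap : ∀ᵐ q ∂μ.prod μ, |exp (lam * s) * u s q.1 q.2 - a * (φ q.1 * ψ q.2)| ≤ δ) :
    ∀ᵐ x ∂μ, ∃ K, ∀ᵐ z ∂μ, |u s x z| ≤ K := by
  filter_upwards [Measure.ae_ae_of_ae_prod hgap] with x hx
  refine ⟨exp (-(lam * s)) * (δ + |a * φ x| * Cψ), hx.mono fun z hz => ?_⟩
  have hℓ : |a * (φ x * ψ z)| ≤ |a * φ x| * Cψ := by
    rw [← mul_assoc, abs_mul]
    exact mul_le_mul_of_nonneg_left (hψC z) (abs_nonneg _)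
  have := abs_sub_abs_le_abs_sub (exp (lam * s) * u s x z) (a * (φ x * ψ z))
  calc |u s x z| = exp (-(lam * s)) * |exp (lam * s) * u s x z| := by
        rw [abs_mul, abs_of_pos (exp_pos _), ← mul_assoc, ← exp_add, neg_add_cancel, exp_zero,
          one_mul]
    _ ≤ exp (-(lam * s)) * (δ + |a * φ x| * Cψ) :=
        mul_le_mul_of_nonneg_left (by linarith) (exp_pos _).le

theorem Uop_add_apply_of_ae_bounded {s t : ℝ} {x : M} {f : M → ℝ} {K C : ℝ}
    (hCK : ∀ y, u (s + t) x y = ∫ z, u s x z * u t z y ∂μ) (hus : Measurable (u s x))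
    (hK : ∀ᵐ z ∂μ, |u s x z| ≤ K) (hut : Integrable (uncurry (u t)) (μ.prod μ))
    (hf : Measurable f) (hfC : ∀ y, |f y| ≤ C) :
    Uop μ u (s + t) f x = Uop μ u s (Uop μ u t f) x := by
  have hF : Integrable (fun p : M × M => u s x p.1 * (u t p.1 p.2 * f p.2)) (μ.prod μ) :=
    (hut.mul_bdd (hf.comp measurable_snd).aestronglyMeasurable
      (ae_of_all _ fun p => hfC p.2)).bdd_mul (hus.comp measurable_fst).aestronglyMeasurable
      (Measure.quasiMeasurePreserving_fst.ae hK)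
  calc Uop μ u (s + t) f x = ∫ y, ∫ z, u s x z * (u t z y * f y) ∂μ ∂μ := by
        simp only [Uop, hCK, ← integral_mul_const, mul_assoc]
    _ = ∫ z, ∫ y, u s x z * (u t z y * f y) ∂μ ∂μ := (integral_integral_swap hF).symm
    _ = Uop μ u s (Uop μ u t f) x := by simp only [Uop, integral_const_mul]

variable [TopologicalSpace M] [μ.IsOpenPosMeasure]

theorem Uop_add_eq_of_gap {s t δ Cψ C : ℝ} {f : M → ℝ}
    (hCK : ∀ x y, u (s + t) x y = ∫ z, u s x z * u t z y ∂μ) (hus : Measurable (uncurry (u s)))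
    (hut : Integrable (uncurry (u t)) (μ.prod μ)) (hψC : ∀ z, |ψ z| ≤ Cψ)
    (hgap : ∀ᵐ q ∂μ.prod μ, |exp (lam * s) * u s q.1 q.2 - a * (φ q.1 * ψ q.2)| ≤ δ)
    (hf : Measurable f) (hfC : ∀ y, |f y| ≤ C) (hst : Continuous (Uop μ u (s + t) f))
    (hs_t : Continuous (Uop μ u s (Uop μ u t f))) :
    Uop μ u (s + t) f = Uop μ u s (Uop μ u t f) :=
  (Continuous.ae_eq_iff_eq μ hst hs_t).1 <| (ae_exists_ae_abs_le_of_gap hψC hgap).mono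
    fun x ⟨_, hK⟩ => Uop_add_apply_of_ae_bounded (hCK x) hus.of_uncurry_left hK hut hf hfC

theorem abs_exp_mul_Uop_sub_le_of_gap {s δ Cψ : ℝ} {g : M → ℝ}
    (hus : Measurable (uncurry (u s))) (hφ : Continuous φ) (hψ : Measurable ψ)
    (hψC : ∀ z, |ψ z| ≤ Cψ)
    (hgap : ∀ᵐ q ∂μ.prod μ, |exp (lam * s) * u s q.1 q.2 - a * (φ q.1 * ψ q.2)| ≤ δ)
    (hg : Integrable g μ) (hUg : Continuous (Uop μ u s g)) (x : M) :
    |exp (lam * s) * Uop μ u s g x - a * (∫ z, ψ z * g z ∂μ) * φ x| ≤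
      δ * ∫ z, |g z| ∂μ := by
  have hcont : Continuous fun x => exp (lam * s) * Uop μ u s g x - a * (∫ z, ψ z * g z ∂μ) * φ x :=
    (continuous_const.mul hUg).sub (continuous_const.mul hφ)
  refine hcont.forall_abs_le_of_ae (μ := μ) ?_ x
  filter_upwards [Measure.ae_ae_of_ae_prod hgap] with x hx
  have hℓ : ∀ z, |a * (φ x * ψ z)| ≤ |a * φ x| * Cψ := fun z => by
    rw [← mul_assoc, abs_mul]
    exact mul_le_mul_of_nonneg_left (hψC z) (abs_nonneg _)
  have := abs_integral_mul_sub_integral_mul_le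
    (hus.of_uncurry_left.const_mul _).aestronglyMeasurable
    ((hψ.const_mul (φ x)).const_mul a).aestronglyMeasurable (ae_of_all _ hℓ) hx hg
  convert this using 3
  · simp only [Uop, mul_assoc, integral_const_mul]
  · simp only [mul_assoc, integral_const_mul]
    ring

end GapEstimate

section Uniqueness

variable [TopologicalSpace M] [MeasurableSpace M] [BorelSpace M] {μ : Measure M}
  [μ.IsOpenPosMeasure] [SFinite μ] {u : ℝ → M → M → ℝ} {lam a : ℝ} {φ ψ : M → ℝ}
  {ε : ℝ → ℝ} {t₁ : ℝ}

theorem eventually_abs_exp_mul_Uop_add_sub_le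
    (hu_meas : ∀ t, 0 < t → Measurable (uncurry (u t)))
    (hCK : ∀ s t : ℝ, 0 < s → 0 < t → ∀ x y, u (s + t) x y = ∫ z, u s x z * u t z y ∂μ)
    (hA2 : ∀ t, 0 < t → ∀ f : M → ℝ, Measurable f → (∃ C, ∀ x, |f x| ≤ C) →
      Continuous (Uop μ u t f) ∧ (∃ C, ∀ x, |Uop μ u t f x| ≤ C))
    (hφ : Continuous φ) (hψ : Measurable ψ) {Cψ : ℝ} (hψC : ∀ z, |ψ z| ≤ Cψ)
    (hgap : ∀ᶠ t in atTop, ∀ᵐ q ∂μ.prod μ,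
      |exp (lam * t) * u t q.1 q.2 - a * (φ q.1 * ψ q.2)| ≤ ε t)
    (ht₁ : 0 < t₁) (hut₁ : Integrable (uncurry (u t₁)) (μ.prod μ)) {f : M → ℝ} {C : ℝ}
    (hf : Measurable f) (hfC : ∀ x, |f x| ≤ C) :
    ∀ᶠ s in atTop, ∀ x, |exp (lam * s) * Uop μ u (s + t₁) f x -
      a * (∫ z, ψ z * Uop μ u t₁ f z ∂μ) * φ x| ≤ ε s * ∫ z, |Uop μ u t₁ f z| ∂μ := by
  obtain ⟨hg, Cg, hgC⟩ := hA2 t₁ ht₁ f hf ⟨C, hfC⟩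
  filter_upwards [hgap, eventually_gt_atTop 0] with s hs hs0
  have hUg := (hA2 s hs0 _ hg.measurable ⟨Cg, hgC⟩).1
  rw [Uop_add_eq_of_gap (hCK s t₁ hs0 ht₁) (hu_meas s hs0) hut₁ hψC hs hf hfC
    (hA2 _ (add_pos hs0 ht₁) f hf ⟨C, hfC⟩).1 hUg]
  exact abs_exp_mul_Uop_sub_le_of_gap (hu_meas s hs0) hφ hψ hψC hs
    (integrable_Uop hut₁ hf hfC) hUg

theorem eq_normalizedWithDensity_of_isQSM [HasOuterApproxClosed M]
    (hu_meas : ∀ t, 0 < t → Measurable (uncurry (u t)))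
    (hCK : ∀ s t : ℝ, 0 < s → 0 < t → ∀ x y, u (s + t) x y = ∫ z, u s x z * u t z y ∂μ)
    (hA2 : ∀ t, 0 < t → ∀ f : M → ℝ, Measurable f → (∃ C, ∀ x, |f x| ≤ C) →
      Continuous (Uop μ u t f) ∧ (∃ C, ∀ x, |Uop μ u t f x| ≤ C))
    (hφ : Continuous φ) {Cφ : ℝ} (hφC : ∀ x, |φ x| ≤ Cφ) (hψ : Measurable ψ) {Cψ : ℝ}
    (hψC : ∀ z, |ψ z| ≤ Cψ) (hψ0 : 0 ≤ᵐ[μ] ψ) (hψi : Integrable ψ μ)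
    (hψpos : 0 < ∫ x, ψ x ∂μ) (ha : a ≠ 0) (hε : Tendsto ε atTop (𝓝 0))
    (hgap : ∀ᶠ t in atTop, ∀ᵐ q ∂μ.prod μ,
      |exp (lam * t) * u t q.1 q.2 - a * (φ q.1 * ψ q.2)| ≤ ε t)
    (ht₁ : 0 < t₁) (hut₁ : Integrable (uncurry (u t₁)) (μ.prod μ)) {c : ℝ} (hc : c ≠ 0)
    (hdual : ∀ f : M → ℝ, Measurable f → (∃ C, ∀ x, |f x| ≤ C) →
      ∫ x, ψ x * Uop μ u t₁ f x ∂μ = c * ∫ x, ψ x * f x ∂μ)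
    {mb : Measure M} [IsProbabilityMeasure mb] (hqsm : IsQSM μ u mb)
    (hφmb : 0 < ∫ x, φ x ∂mb) :
    mb = normalizedWithDensity μ ψ := by
  have hbdd : ∀ {F : M → ℝ}, Continuous F → (∃ C, ∀ x, |F x| ≤ C) → Integrable F mb :=
    fun hF ⟨C, hC⟩ => .of_bound hF.aestronglyMeasurable C (ae_of_all _ hC)
  have hlim : ∀ f : M → ℝ, Measurable f → (∃ C, ∀ x, |f x| ≤ C) →
      Tendsto (fun s => ∫ x, exp (lam * s) * Uop μ u (s + t₁) f x ∂mb) atTop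
        (𝓝 (a * (c * ∫ x, ψ x * f x ∂μ) * ∫ x, φ x ∂mb)) := by
    rintro f hf ⟨C, hfC⟩
    rw [← hdual f hf ⟨C, hfC⟩, ← integral_const_mul]
    refine tendsto_integral_of_eventually_abs_sub_le ?_ ((hbdd hφ ⟨Cφ, hφC⟩).const_mul _)
      (by simpa using hε.mul_const (∫ z, |Uop μ u t₁ f z| ∂μ))
      (eventually_abs_exp_mul_Uop_add_sub_le hu_meas hCK hA2 hφ hψ hψC hgap ht₁ hut₁ hf hfC)
    filter_upwards [eventually_gt_atTop 0] with s hs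
    obtain ⟨hcont, hb⟩ := hA2 _ (add_pos hs ht₁) f hf ⟨C, hfC⟩
    exact (hbdd hcont hb).const_mul _
  have hmb : ∀ f : M → ℝ, Measurable f → (∃ C, ∀ x, |f x| ≤ C) →
      ∫ x, f x ∂mb = (∫ x, ψ x ∂μ)⁻¹ * ∫ x, ψ x * f x ∂μ := by
    intro f hf hfC
    have hratio := (hlim f hf hfC).div (hlim _ measurable_const ⟨1, fun _ => abs_one.le⟩)
      (by simp only [mul_one]; positivity)
    refine (tendsto_nhds_unique (tendsto_const_nhds.congr' ?_) hratio).trans ?_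
    · filter_upwards [eventually_gt_atTop 0] with s hs
      simp only [Pi.div_apply, integral_const_mul]
      rw [mul_div_mul_left _ _ (exp_pos _).ne', (hqsm _ (add_pos hs ht₁) f hf hfC).2]
    · simp only [mul_one]
      field_simp
  have := isProbabilityMeasure_normalizedWithDensity hψ0 hψi hψpos
  refine ext_of_forall_integral_eq_of_IsFiniteMeasure fun f => ?_
  rw [hmb f f.continuous.measurable ⟨‖f‖, f.norm_coe_le_norm⟩,
    integral_normalizedWithDensity hψ0 hψi]

end Uniqueness

theorem normalizedWithDensity_isQSM_and_unique [TopologicalSpace M] [HasOuterApproxClosed M]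
    [MeasurableSpace M] [BorelSpace M] {μ : Measure M} [μ.IsOpenPosMeasure] [SFinite μ]
    (hμ : μ ≠ 0) {u : ℝ → M → M → ℝ} (hu_nonneg : ∀ t, 0 < t → ∀ x y, 0 ≤ u t x y)
    (hu_meas : ∀ t, 0 < t → Measurable (uncurry (u t)))
    (hCK : ∀ s t : ℝ, 0 < s → 0 < t → ∀ x y, u (s + t) x y = ∫ z, u s x z * u t z y ∂μ)
    (hA2 : ∀ t, 0 < t → ∀ f : M → ℝ, Measurable f → (∃ C, ∀ x, |f x| ≤ C) →
      Continuous (Uop μ u t f) ∧ (∃ C, ∀ x, |Uop μ u t f x| ≤ C))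
    {lam : ℝ} {φ ψ : M → ℝ} (hφ : Continuous φ) (hφC : ∃ C, ∀ x, |φ x| ≤ C)
    (hψ : Continuous ψ) (hψC : ∃ C, ∀ x, |ψ x| ≤ C) (hψpos : ∀ᵐ x ∂μ, 0 < ψ x)
    (hψeig : ∀ t, 0 < t → ∀ y, Ustar μ u t ψ y = exp (-(lam * t)) * ψ y)
    {a : ℝ} (ha : a ≠ 0) {ε : ℝ → ℝ} (hε : Tendsto ε atTop (𝓝 0))
    (hgap : ∀ᶠ t in atTop, ∀ᵐ q ∂μ.prod μ,
      |exp (lam * t) * u t q.1 q.2 - a * (φ q.1 * ψ q.2)| ≤ ε t)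
    {t₁ : ℝ} (ht₁ : 0 < t₁) (hut₁ : Integrable (uncurry (u t₁)) (μ.prod μ)) :
    IsQSM μ u (normalizedWithDensity μ ψ) ∧
      ∀ mb : Measure M, IsProbabilityMeasure mb → IsQSM μ u mb →
        0 < ∫ x, φ x ∂mb → mb = normalizedWithDensity μ ψ := by
  obtain ⟨Cφ, hφC⟩ := hφC
  obtain ⟨Cψ, hψC⟩ := hψC
  have hψ0 : 0 ≤ᵐ[μ] ψ := hψpos.mono fun x hx => hx.le
  have hψi : Integrable ψ μ :=
    integrable_of_Ustar_eq_smul hut₁ hψ.measurable hψC (exp_pos _).ne' (hψeig t₁ ht₁)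
  have hψI : 0 < ∫ x, ψ x ∂μ := integral_pos_of_ae_pos hμ hψpos hψi
  have hdual : ∀ t, 0 < t → ∀ f : M → ℝ, Measurable f → (∃ C, ∀ x, |f x| ≤ C) →
      ∫ x, ψ x * Uop μ u t f x ∂μ = exp (-(lam * t)) * ∫ x, ψ x * f x ∂μ := by
    rintro t ht f hf ⟨C, hfC⟩
    rw [integral_mul_Uop_eq_integral_Ustar_mul (integrable_prod_of_Ustar_eq_smul
      (hu_nonneg t ht) (hu_meas t ht) hψ.measurable hψpos hψi (exp_pos _).ne' (hψeig t ht)) hf hfC]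
    simp only [hψeig t ht, mul_assoc, integral_const_mul]
  refine ⟨isQSM_normalizedWithDensity hψ0 hψi hψI (fun t _ => exp_pos _) hdual,
    fun mb _ hqsm hφmb => ?_⟩
  exact eq_normalizedWithDensity_of_isQSM hu_meas hCK hA2 hφ hφC hψ.measurable hψC hψ0 hψi hψI ha
    hε hgap ht₁ hut₁ (exp_pos _).ne' (hdual t₁ ht₁) hqsm hφmb

theorem statement5_general
    [TopologicalSpace M] [PolishSpace M]
    [MeasurableSpace M] [BorelSpace M]
    (μ : Measure M) [Measure.IsOpenPosMeasure μ] [SigmaFinite μ]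
    (u : ℝ → M → M → ℝ)
    (hu_nonneg : ∀ t, 0 < t → ∀ x y, 0 ≤ u t x y)
    (hu_meas : ∀ t, 0 < t → Measurable (Function.uncurry (u t)))
    (hCK : ∀ s t : ℝ, 0 < s → 0 < t → ∀ x y,
      u (s + t) x y = ∫ z, u s x z * u t z y ∂μ)
    (t₀ : ℝ) (ht₀ : 0 < t₀)
    (hA2 : ∀ t, 0 < t → ∀ f : M → ℝ, Measurable f → (∃ C, ∀ x, |f x| ≤ C) →
      Continuous (Uop μ u t f) ∧ (∃ C, ∀ x, |Uop μ u t f x| ≤ C) ∧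
      Continuous (Ustar μ u t f) ∧ (∃ C, ∀ x, |Ustar μ u t f x| ≤ C))
    (lam : ℝ) (phi psi : M → ℝ)
    (hphi_cont : Continuous phi) (hphi_bdd : ∃ C, ∀ x, |phi x| ≤ C)
    (hphi_pos : ∀ᵐ x ∂μ, 0 < phi x)
    (hpsi_cont : Continuous psi) (hpsi_bdd : ∃ C, ∀ x, |psi x| ≤ C)
    (hpsi_pos : ∀ᵐ x ∂μ, 0 < psi x)
    (hphi_eig : ∀ t, 0 < t → ∀ x, Uop μ u t phi x = Real.exp (-(lam * t)) * phi x)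
    (hpsi_eig : ∀ t, 0 < t → ∀ y, Ustar μ u t psi y = Real.exp (-(lam * t)) * psi y)
    (hLam_pos : 0 < ∫ x, phi x * psi x ∂μ)
    (C₀ γ : ℝ) (hγ : 0 < γ)
    (hgap : ∀ t, 2 * t₀ < t → ∀ᵐ q ∂(μ.prod μ),
      |Real.exp (lam * t) * u t q.1 q.2 -
        (∫ x, phi x * psi x ∂μ)⁻¹ * (phi q.1 * psi q.2)| ≤ C₀ * Real.exp (-(γ * t)))
    (t₁ : ℝ) (ht₁ : t₀ ≤ t₁)
    (hZ : heatContent μ u t₁ < ⊤) :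
    (IsQSM μ u ((∫⁻ x, ENNReal.ofReal (psi x) ∂μ)⁻¹ • μ.withDensity fun x => ENNReal.ofReal (psi x)) ∧
      ∀ mb : Measure M, IsProbabilityMeasure mb → IsQSM μ u mb →
        0 < ∫ x, phi x ∂mb → mb = ((∫⁻ x, ENNReal.ofReal (psi x) ∂μ)⁻¹ • μ.withDensity fun x => ENNReal.ofReal (psi x))) ∧
    (IsQSMstar μ u ((∫⁻ x, ENNReal.ofReal (phi x) ∂μ)⁻¹ • μ.withDensity fun x => ENNReal.ofReal (phi x)) ∧
      ∀ mb : Measure M, IsProbabilityMeasure mb → IsQSMstar μ u mb →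
        0 < ∫ x, psi x ∂mb → mb = ((∫⁻ x, ENNReal.ofReal (phi x) ∂μ)⁻¹ • μ.withDensity fun x => ENNReal.ofReal (phi x))) := by
  have ht₁pos : 0 < t₁ := ht₀.trans_le ht₁
  have hμ : μ ≠ 0 := by
    rintro rfl
    simp at hLam_pos
  have hut₁ : Integrable (uncurry (u t₁)) (μ.prod μ) :=
    integrable_uncurry_of_heatContent_lt_top (hu_nonneg t₁ ht₁pos) (hu_meas t₁ ht₁pos) hZ
  have hε : Tendsto (fun t => C₀ * exp (-(γ * t))) atTop (𝓝 0) := by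
    simpa using (tendsto_exp_atBot.comp
      (tendsto_neg_atTop_atBot.comp (tendsto_id.const_mul_atTop hγ))).const_mul C₀
  have hgap' := (eventually_gt_atTop (2 * t₀)).mono hgap
  have hgap_swap : ∀ᶠ t in atTop, ∀ᵐ q ∂μ.prod μ, |exp (lam * t) * u t q.2 q.1 -
      (∫ x, phi x * psi x ∂μ)⁻¹ * (psi q.1 * phi q.2)| ≤ C₀ * exp (-(γ * t)) :=
    hgap'.mono fun t ht => (Measure.measurePreserving_swap.quasiMeasurePreserving.ae ht).mono
      fun q hq => by rwa [mul_comm (psi q.1)]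
  have hCK_swap : ∀ s t : ℝ, 0 < s → 0 < t → ∀ x y,
      u (s + t) y x = ∫ z, u s z x * u t y z ∂μ := fun s t hs ht x y => by
    simp only [add_comm s t, hCK t s ht hs, mul_comm (u t y _)]
  have ha : (∫ x, phi x * psi x ∂μ)⁻¹ ≠ 0 := inv_ne_zero hLam_pos.ne'
  exact ⟨normalizedWithDensity_isQSM_and_unique hμ hu_nonneg hu_meas hCK
      (fun t ht f hf hb => (hA2 t ht f hf hb).imp_right And.left) hphi_cont hphi_bdd hpsi_cont
      hpsi_bdd hpsi_pos hpsi_eig ha hε hgap' ht₁pos hut₁,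
    -- for the transposed kernel, `Uop` and `Ustar` exchange roles definitionally
    normalizedWithDensity_isQSM_and_unique (u := fun t x y => u t y x) hμ
      (fun t ht x y => hu_nonneg t ht y x) (fun t ht => (hu_meas t ht).comp measurable_swap)
      hCK_swap (fun t ht f hf hb => (hA2 t ht f hf hb).2.2) hpsi_cont hpsi_bdd hphi_cont
      hphi_bdd hphi_pos hphi_eig ha hε hgap_swap ht₁pos hut₁.swap⟩

/-- Under (A2)–(A3), the ground-state data with the spectral-gap estimate
and finite heat content, the measure `m = ψ₀ dμ / ∫ψ₀ dμ` is a quasi-stationary measure of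
`{U_t}`, and it is the unique quasi-stationary probability measure `m̄` with `m̄(φ₀) > 0`;
analogously `m* = φ₀ dμ / ∫φ₀ dμ` for `{U_t^*}` among `m̄` with `m̄(ψ₀) > 0`. -/
theorem statement5
    [TopologicalSpace M] [PolishSpace M] [LocallyCompactSpace M]
    [MeasurableSpace M] [BorelSpace M]
    (μ : Measure M) [IsLocallyFiniteMeasure μ] [Measure.IsOpenPosMeasure μ] [SigmaFinite μ]
    (u : ℝ → M → M → ℝ)
    (hu_nonneg : ∀ t, 0 < t → ∀ x y, 0 ≤ u t x y)
    (hu_meas : ∀ t, 0 < t → Measurable (Function.uncurry (u t)))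
    (hCK : ∀ s t : ℝ, 0 < s → 0 < t → ∀ x y,
      u (s + t) x y = ∫ z, u s x z * u t z y ∂μ)
    (t₀ : ℝ) (ht₀ : 0 < t₀)
    (hA2 : ∀ t, 0 < t → ∀ f : M → ℝ, Measurable f → (∃ C, ∀ x, |f x| ≤ C) →
      Continuous (Uop μ u t f) ∧ (∃ C, ∀ x, |Uop μ u t f x| ≤ C) ∧
      Continuous (Ustar μ u t f) ∧ (∃ C, ∀ x, |Ustar μ u t f x| ≤ C))
    (hA3 : (∃ C, ∀ᵐ x ∂μ, ∫ y, (u t₀ x y) ^ 2 ∂μ ≤ C) ∧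
      (∃ C, ∀ᵐ y ∂μ, ∫ x, (u t₀ x y) ^ 2 ∂μ ≤ C))
    (lam : ℝ) (phi psi : M → ℝ)
    (hphi_cont : Continuous phi) (hphi_bdd : ∃ C, ∀ x, |phi x| ≤ C)
    (hphi_L2 : MemLp phi 2 μ) (hphi_pos : ∀ᵐ x ∂μ, 0 < phi x)
    (hpsi_cont : Continuous psi) (hpsi_bdd : ∃ C, ∀ x, |psi x| ≤ C)
    (hpsi_L2 : MemLp psi 2 μ) (hpsi_pos : ∀ᵐ x ∂μ, 0 < psi x)
    (hphi_eig : ∀ t, 0 < t → ∀ x, Uop μ u t phi x = Real.exp (-(lam * t)) * phi x)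
    (hpsi_eig : ∀ t, 0 < t → ∀ y, Ustar μ u t psi y = Real.exp (-(lam * t)) * psi y)
    (hLam_int : Integrable (fun x => phi x * psi x) μ)
    (hLam_pos : 0 < ∫ x, phi x * psi x ∂μ)
    (C₀ γ : ℝ) (hC₀ : 0 < C₀) (hγ : 0 < γ)
    (hgap : ∀ t, 2 * t₀ < t → ∀ᵐ q ∂(μ.prod μ),
      |Real.exp (lam * t) * u t q.1 q.2 -
        (∫ x, phi x * psi x ∂μ)⁻¹ * (phi q.1 * psi q.2)| ≤ C₀ * Real.exp (-(γ * t)))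
    (t₁ : ℝ) (ht₁ : t₀ ≤ t₁)
    (hZ : heatContent μ u t₁ < ⊤) :
    (IsQSM μ u ((∫⁻ x, ENNReal.ofReal (psi x) ∂μ)⁻¹ • μ.withDensity fun x => ENNReal.ofReal (psi x)) ∧
      ∀ mb : Measure M, IsProbabilityMeasure mb → IsQSM μ u mb →
        0 < ∫ x, phi x ∂mb → mb = ((∫⁻ x, ENNReal.ofReal (psi x) ∂μ)⁻¹ • μ.withDensity fun x => ENNReal.ofReal (psi x))) ∧
    (IsQSMstar μ u ((∫⁻ x, ENNReal.ofReal (phi x) ∂μ)⁻¹ • μ.withDensity fun x => ENNReal.ofReal (phi x)) ∧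
      ∀ mb : Measure M, IsProbabilityMeasure mb → IsQSMstar μ u mb →
        0 < ∫ x, psi x ∂mb → mb = ((∫⁻ x, ENNReal.ofReal (phi x) ∂μ)⁻¹ • μ.withDensity fun x => ENNReal.ofReal (phi x))) :=
  statement5_general μ u hu_nonneg hu_meas hCK t₀ ht₀ hA2 lam phi psi hphi_cont hphi_bdd hphi_pos
    hpsi_cont hpsi_bdd hpsi_pos hphi_eig hpsi_eig hLam_pos C₀ γ hγ hgap t₁ ht₁ hZ
end
end

section
/- Assume (A2)–(A3) for some t₀ > 0 and the ground state data. If there is a constant C > 0 such that sup_{x ∈ M∖N} |U_t φ₀(x)/U_t 1_M(x) − C| → 0 as t → ∞, then the semigroup {U_t} is aGSD, i.e. there exist constants C₁, t₁ > 0 with U_t 1_M(x) ≤ C₁ e^{−λ₀ t} φ₀(x) for all t ≥ t₁ and all x ∈ M. -/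
/-! Once `|U_t φ₀ / U_t 1 - C| ≤ C/2`, the eigen-relation gives
`U_t 1 ≤ (2/C) U_t φ₀ = (2/C) e^{-λ₀ t} φ₀` off the null set `N`. Both sides are continuous
and `μ` charges every nonempty open set, so the inequality holds on all of `M`. -/

open MeasureTheory Real Set Filter Topology
open scoped ENNReal NNReal

noncomputable section

variable {M : Type*}

theorem Continuous.le_of_ae_le {X Y : Type*} [TopologicalSpace X] [MeasurableSpace X]
    {μ : Measure X} [μ.IsOpenPosMeasure] [TopologicalSpace Y] [Preorder Y]
    [OrderClosedTopology Y] {f g : X → Y} (hf : Continuous f) (hg : Continuous g)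
    (h : ∀ᵐ x ∂μ, f x ≤ g x) (x : X) : f x ≤ g x :=
  (isClosed_le hf hg).closure_subset (Measure.dense_of_ae h x)

theorem statement8_general
    [TopologicalSpace M] [MeasurableSpace M]
    (μ : Measure M) [Measure.IsOpenPosMeasure μ]
    (u : ℝ → M → M → ℝ)
    (hA2 : ∀ t, 0 < t → ∀ f : M → ℝ, Measurable f → (∃ C, ∀ x, |f x| ≤ C) →
      Continuous (Uop μ u t f) ∧ (∃ C, ∀ x, |Uop μ u t f x| ≤ C) ∧
      Continuous (Ustar μ u t f) ∧ (∃ C, ∀ x, |Ustar μ u t f x| ≤ C))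
    (lam : ℝ) (phi psi : M → ℝ)
    (hphi_cont : Continuous phi) (hphi_pos : ∀ᵐ x ∂μ, 0 < phi x)
    (hpsi_pos : ∀ᵐ x ∂μ, 0 < psi x)
    (hphi_eig : ∀ t, 0 < t → ∀ x, Uop μ u t phi x = Real.exp (-(lam * t)) * phi x)
    (C : ℝ) (hC : 0 < C)
    (hconv : ∀ ε : ℝ, 0 < ε → ∃ T : ℝ, ∀ t, T ≤ t → ∀ x, x ∉ ({x | phi x = 0} ∪ {x | psi x = 0}) →
      |Uop μ u t phi x / Uop μ u t (fun _ => (1 : ℝ)) x - C| ≤ ε) :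
    ∃ C₁ : ℝ, 0 < C₁ ∧ ∃ t₁ : ℝ, 0 < t₁ ∧
      ∀ t, t₁ ≤ t → ∀ x, Uop μ u t (fun _ => (1 : ℝ)) x ≤ C₁ * Real.exp (-(lam * t)) * phi x := by
  obtain ⟨T, hT⟩ := hconv (C / 2) (by positivity)
  refine ⟨2 / C, by positivity, max T 1, by positivity, fun t ht => ?_⟩
  have ht_pos : 0 < t := one_pos.trans_le ((le_max_right T 1).trans ht)
  have hU1_cont : Continuous (Uop μ u t fun _ => (1 : ℝ)) :=
    (hA2 t ht_pos _ measurable_const ⟨1, fun _ => by simp⟩).1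
  refine hU1_cont.le_of_ae_le (μ := μ) (by fun_prop) ?_
  filter_upwards [hphi_pos, hpsi_pos] with x hφ hψ
  have hx : x ∉ ({x | phi x = 0} ∪ {x | psi x = 0}) := by simp [hφ.ne', hψ.ne']
  have hratio : C / 2 ≤ Uop μ u t phi x / Uop μ u t (fun _ => (1 : ℝ)) x := by
    linarith [(abs_le.mp (hT t ((le_max_left T 1).trans ht) x hx)).1]
  rw [hphi_eig t ht_pos] at hratio
  have hU1_pos : 0 < Uop μ u t (fun _ => (1 : ℝ)) x := by
    rcases div_pos_iff.mp ((half_pos hC).trans_le hratio) with ⟨-, h⟩ | ⟨h, -⟩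
    · exact h
    · exact absurd h (by positivity : 0 ≤ Real.exp (-(lam * t)) * phi x).not_gt
  calc Uop μ u t (fun _ => (1 : ℝ)) x ≤ Real.exp (-(lam * t)) * phi x / (C / 2) :=
        (le_div_comm₀ hU1_pos (half_pos hC)).mpr hratio
    _ = 2 / C * Real.exp (-(lam * t)) * phi x := by ring

/-- If `sup_(x ∈ M∖N) |U_t φ₀(x)/U_t 1(x) - C| → 0` as `t → ∞` for some
constant `C > 0`, then `{U_t}` is aGSD. -/
theorem statement8
    [TopologicalSpace M] [PolishSpace M] [LocallyCompactSpace M]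
    [MeasurableSpace M] [BorelSpace M]
    (μ : Measure M) [IsLocallyFiniteMeasure μ] [Measure.IsOpenPosMeasure μ] [SigmaFinite μ]
    (u : ℝ → M → M → ℝ)
    (hu_nonneg : ∀ t, 0 < t → ∀ x y, 0 ≤ u t x y)
    (hu_meas : ∀ t, 0 < t → Measurable (Function.uncurry (u t)))
    (hCK : ∀ s t : ℝ, 0 < s → 0 < t → ∀ x y,
      u (s + t) x y = ∫ z, u s x z * u t z y ∂μ)
    (t₀ : ℝ) (ht₀ : 0 < t₀)
    (hA2 : ∀ t, 0 < t → ∀ f : M → ℝ, Measurable f → (∃ C, ∀ x, |f x| ≤ C) →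
      Continuous (Uop μ u t f) ∧ (∃ C, ∀ x, |Uop μ u t f x| ≤ C) ∧
      Continuous (Ustar μ u t f) ∧ (∃ C, ∀ x, |Ustar μ u t f x| ≤ C))
    (hA3 : (∃ C, ∀ᵐ x ∂μ, ∫ y, (u t₀ x y) ^ 2 ∂μ ≤ C) ∧
      (∃ C, ∀ᵐ y ∂μ, ∫ x, (u t₀ x y) ^ 2 ∂μ ≤ C))
    (lam : ℝ) (phi psi : M → ℝ)
    (hphi_cont : Continuous phi) (hphi_bdd : ∃ C, ∀ x, |phi x| ≤ C)
    (hphi_L2 : MemLp phi 2 μ) (hphi_pos : ∀ᵐ x ∂μ, 0 < phi x)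
    (hpsi_cont : Continuous psi) (hpsi_bdd : ∃ C, ∀ x, |psi x| ≤ C)
    (hpsi_L2 : MemLp psi 2 μ) (hpsi_pos : ∀ᵐ x ∂μ, 0 < psi x)
    (hphi_eig : ∀ t, 0 < t → ∀ x, Uop μ u t phi x = Real.exp (-(lam * t)) * phi x)
    (hpsi_eig : ∀ t, 0 < t → ∀ y, Ustar μ u t psi y = Real.exp (-(lam * t)) * psi y)
    (C : ℝ) (hC : 0 < C)
    (hconv : ∀ ε : ℝ, 0 < ε → ∃ T : ℝ, ∀ t, T ≤ t → ∀ x, x ∉ ({x | phi x = 0} ∪ {x | psi x = 0}) →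
      |Uop μ u t phi x / Uop μ u t (fun _ => (1 : ℝ)) x - C| ≤ ε) :
    ∃ C₁ : ℝ, 0 < C₁ ∧ ∃ t₁ : ℝ, 0 < t₁ ∧
      ∀ t, t₁ ≤ t → ∀ x, Uop μ u t (fun _ => (1 : ℝ)) x ≤ C₁ * Real.exp (-(lam * t)) * phi x :=
  statement8_general μ u hA2 lam phi psi hphi_cont hphi_pos hpsi_pos hphi_eig C hC hconv
end
end

section
/- Assume (A2)–(A3) for some t₀ > 0, the ground state data with the spectral-gap kernel estimate (constants C₀, γ), and Z(t₁) < ∞ for some t₁ ≥ t₀. Then there exists C > 0 such that |e^{λ₀ t} Z(t) − ‖φ₀‖₁ ‖ψ₀‖₁ / Λ| ≤ C e^{−γ t} for all t > 6t₁. -/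
/-!
Write `t = t₁ + s + t₁`. By Chapman–Kolmogorov, `Z(t) = ∬ g(z) u_s(z,w) h(w)`, where `g` and
`h` are the column and row masses of `u_{t₁}`, each of total mass `Z(t₁) < ∞`. The spectral-gap
estimate replaces `e^{λ₀ s} u_s(z,w)` by `Λ⁻¹ φ₀(z) ψ₀(w)` up to `C₀ e^{-γ s}`, and the
eigenfunction equations give `∫ g φ₀ = e^{-λ₀ t₁} ‖φ₀‖₁` and `∫ h ψ₀ = e^{-λ₀ t₁} ‖ψ₀‖₁`; hence
`|e^{λ₀ s} Z(t) - e^{-2λ₀ t₁} ‖φ₀‖₁ ‖ψ₀‖₁ / Λ| ≤ C₀ e^{-γ s} Z(t₁)²`, and multiplying by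
`e^{2λ₀ t₁}` gives the claim. All kernel integrals are taken in `[0, ∞]`, so Tonelli applies
freely; the gap estimate also bounds `u_τ` for `τ > 2t₀`, which makes the Chapman–Kolmogorov
integrands integrable.
-/

open MeasureTheory Real Set Filter Topology
open scoped ENNReal NNReal

noncomputable section

variable {M : Type*}

open Function

section Lintegral

variable {α : Type*} [MeasurableSpace α] {ν : Measure α}

theorem ofReal_integral_mul_eq_lintegral {f g : α → ℝ} (hf : 0 ≤ᵐ[ν] f) (hg : 0 ≤ᵐ[ν] g)
    (hfg : Integrable (fun x => f x * g x) ν) :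
    ENNReal.ofReal (∫ x, f x * g x ∂ν) = ∫⁻ x, ENNReal.ofReal (f x) * ENNReal.ofReal (g x) ∂ν := by
  have hfg_nonneg : 0 ≤ᵐ[ν] fun x => f x * g x := by
    filter_upwards [hf, hg] with x hfx hgx using mul_nonneg hfx hgx
  rw [ofReal_integral_eq_lintegral_ofReal hfg hfg_nonneg]
  refine lintegral_congr_ae ?_
  filter_upwards [hf] with x hfx using ENNReal.ofReal_mul hfx

theorem lintegral_mul_ofReal_le_add {G : α → ℝ≥0∞} (hG : Measurable G) {a b : α → ℝ} {e : ℝ}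
    (hab : ∀ᵐ x ∂ν, a x ≤ b x + e) :
    ∫⁻ x, G x * ENNReal.ofReal (a x) ∂ν ≤
      ∫⁻ x, G x * ENNReal.ofReal (b x) ∂ν + ENNReal.ofReal e * ∫⁻ x, G x ∂ν := by
  rw [← lintegral_const_mul _ hG, ← lintegral_add_right _ (hG.const_mul _)]
  refine lintegral_mono_ae ?_
  filter_upwards [hab] with x hx
  calc G x * ENNReal.ofReal (a x)
      ≤ G x * (ENNReal.ofReal (b x) + ENNReal.ofReal e) := by
        gcongr
        exact (ENNReal.ofReal_le_ofReal hx).trans ENNReal.ofReal_add_le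
    _ = G x * ENNReal.ofReal (b x) + ENNReal.ofReal e * G x := by ring

theorem abs_toReal_lintegral_mul_ofReal_sub_le {G : α → ℝ≥0∞} (hG : Measurable G)
    (hG_fin : ∫⁻ x, G x ∂ν ≠ ⊤) {a b : α → ℝ} {B e : ℝ} (he : 0 ≤ e)
    (hb : ∀ᵐ x ∂ν, b x ≤ B) (hab : ∀ᵐ x ∂ν, |a x - b x| ≤ e) :
    ∫⁻ x, G x * ENNReal.ofReal (a x) ∂ν ≠ ⊤ ∧
      |(∫⁻ x, G x * ENNReal.ofReal (a x) ∂ν).toReal -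
          (∫⁻ x, G x * ENNReal.ofReal (b x) ∂ν).toReal| ≤ e * (∫⁻ x, G x ∂ν).toReal := by
  have hb_fin : ∫⁻ x, G x * ENNReal.ofReal (b x) ∂ν ≠ ⊤ := by
    refine ne_top_of_le_ne_top ?_ (lintegral_mul_ofReal_le_add (e := 0) (b := fun _ => B) hG
      (by simpa using hb))
    rw [lintegral_mul_const _ hG]
    finiteness
  have he_fin : ENNReal.ofReal e * ∫⁻ x, G x ∂ν ≠ ⊤ := by finiteness
  have hupper := lintegral_mul_ofReal_le_add (ν := ν) hG (a := a) (b := b)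
    (hab.mono fun x hx => by linarith [(abs_le.mp hx).2])
  have hlower := lintegral_mul_ofReal_le_add (ν := ν) hG (a := b) (b := a)
    (hab.mono fun x hx => by linarith [(abs_le.mp hx).1])
  have ha_fin := ne_top_of_le_ne_top (ENNReal.add_ne_top.mpr ⟨hb_fin, he_fin⟩) hupper
  have he_toReal : (ENNReal.ofReal e * ∫⁻ x, G x ∂ν).toReal = e * (∫⁻ x, G x ∂ν).toReal := by
    rw [ENNReal.toReal_mul, ENNReal.toReal_ofReal he]
  refine ⟨ha_fin, abs_sub_le_iff.mpr ⟨?_, ?_⟩⟩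
  · linarith [ENNReal.toReal_le_add hupper hb_fin he_fin]
  · linarith [ENNReal.toReal_le_add hlower ha_fin he_fin]

theorem lintegral_mul_ofReal_const_mul (G : α → ℝ≥0∞) (a : α → ℝ) {c : ℝ} (hc : 0 ≤ c) :
    ∫⁻ x, G x * ENNReal.ofReal (c * a x) ∂ν =
      ENNReal.ofReal c * ∫⁻ x, G x * ENNReal.ofReal (a x) ∂ν := by
  rw [← lintegral_const_mul' _ _ ENNReal.ofReal_ne_top]
  refine lintegral_congr fun x => ?_
  rw [ENNReal.ofReal_mul hc]
  ring

theorem integral_abs_eq_toReal_lintegral_ofReal {f : α → ℝ} (hf : Measurable f)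
    (hf_nonneg : 0 ≤ᵐ[ν] f) : ∫ x, |f x| ∂ν = (∫⁻ x, ENNReal.ofReal (f x) ∂ν).toReal := by
  rw [integral_eq_lintegral_of_nonneg_ae (Eventually.of_forall fun x => abs_nonneg (f x))
    hf.abs.aestronglyMeasurable]
  congr 1
  refine lintegral_congr_ae ?_
  filter_upwards [hf_nonneg] with x hx
  rw [abs_of_nonneg hx]

theorem ae_le_of_abs_mul_sub_le {a b : α → ℝ} {c e B : ℝ} (hc : 0 < c) (hb : ∀ x, b x ≤ B)
    (h : ∀ᵐ x ∂ν, |c * a x - b x| ≤ e) : ∀ᵐ x ∂ν, a x ≤ c⁻¹ * (B + e) := by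
  filter_upwards [h] with x hx
  rw [le_inv_mul_iff₀ hc]
  linarith [(abs_le.mp hx).2, hb x]

end Lintegral

theorem exists_mul_mul_le {phi psi : M → ℝ} (hphi : ∃ C, ∀ x, |phi x| ≤ C)
    (hpsi : ∃ C, ∀ x, |psi x| ≤ C) {c : ℝ} (hc : 0 ≤ c) :
    ∃ B, ∀ q : M × M, c * (phi q.1 * psi q.2) ≤ B := by
  obtain ⟨Cφ, hCφ⟩ := hphi
  obtain ⟨Cψ, hCψ⟩ := hpsi
  refine ⟨c * (Cφ * Cψ), fun q => mul_le_mul_of_nonneg_left ?_ hc⟩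
  calc phi q.1 * psi q.2 ≤ |phi q.1| * |psi q.2| := by rw [← abs_mul]; exact le_abs_self _
    _ ≤ Cφ * Cψ := mul_le_mul (hCφ q.1) (hCψ q.2) (abs_nonneg _) ((abs_nonneg _).trans (hCφ q.1))

theorem abs_exp_mul_sub_div_le {lam γ a s Z Φ Ψ Λ C L : ℝ} (hΛ : Λ ≠ 0)
    (h : |exp (lam * s) * Z - Λ⁻¹ * (exp (-(lam * a)) * Φ * (exp (-(lam * a)) * Ψ))| ≤
      C * exp (-(γ * s)) * (L * L)) :
    |exp (lam * (a + (s + a))) * Z - Φ * Ψ / Λ| ≤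
      C * L ^ 2 * exp (2 * (lam + γ) * a) * exp (-(γ * (a + (s + a)))) := by
  have he₁ : exp (lam * (a + (s + a))) = exp (lam * a) ^ 2 * exp (lam * s) := by
    rw [sq, ← exp_add, ← exp_add]; ring_nf
  have he₂ : exp (2 * (lam + γ) * a) * exp (-(γ * (a + (s + a)))) =
      exp (lam * a) ^ 2 * exp (-(γ * s)) := by
    rw [sq, ← exp_add, ← exp_add, ← exp_add]; ring_nf
  calc |exp (lam * (a + (s + a))) * Z - Φ * Ψ / Λ|
      = exp (lam * a) ^ 2 *
          |exp (lam * s) * Z - Λ⁻¹ * (exp (-(lam * a)) * Φ * (exp (-(lam * a)) * Ψ))| := by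
        rw [← abs_of_pos (pow_pos (exp_pos (lam * a)) 2), ← abs_mul, he₁, exp_neg]
        congr 1
        field_simp
    _ ≤ exp (lam * a) ^ 2 * (C * exp (-(γ * s)) * (L * L)) := by gcongr
    _ = C * L ^ 2 * exp (2 * (lam + γ) * a) * exp (-(γ * (a + (s + a)))) := by
        rw [mul_assoc (C * L ^ 2), he₂]; ring

section Kernel

variable [MeasurableSpace M] {μ : Measure M} [SFinite μ]

theorem lintegral_lintegral_ofReal_swap {k : M → M → ℝ} (hk : Measurable (uncurry k)) :
    ∫⁻ x, ∫⁻ y, ENNReal.ofReal (k y x) ∂μ ∂μ = ∫⁻ x, ∫⁻ y, ENNReal.ofReal (k x y) ∂μ ∂μ :=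
  lintegral_lintegral_swap (hk.comp measurable_swap).ennreal_ofReal.aemeasurable

theorem measurable_lintegral_ofReal_left {k : M → M → ℝ} (hk : Measurable (uncurry k)) :
    Measurable fun z => ∫⁻ x, ENNReal.ofReal (k x z) ∂μ :=
  Measurable.lintegral_prod_left hk.ennreal_ofReal

theorem measurable_lintegral_ofReal_right {k : M → M → ℝ} (hk : Measurable (uncurry k)) :
    Measurable fun x => ∫⁻ z, ENNReal.ofReal (k x z) ∂μ :=
  Measurable.lintegral_prod_right' hk.ennreal_ofReal

theorem ae_integrable_of_lintegral_lintegral_ne_top {k : M → M → ℝ} (hk_nonneg : ∀ x y, 0 ≤ k x y)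
    (hk : Measurable (uncurry k)) (hfin : ∫⁻ x, ∫⁻ y, ENNReal.ofReal (k x y) ∂μ ∂μ ≠ ⊤) :
    ∀ᵐ x ∂μ, Integrable (k x) μ := by
  filter_upwards [ae_lt_top (measurable_lintegral_ofReal_right hk) hfin] with x hx
  refine ⟨hk.of_uncurry_left.aestronglyMeasurable, ?_⟩
  rwa [hasFiniteIntegral_iff_ofReal (Eventually.of_forall (hk_nonneg x))]

theorem lintegral_ofReal_eq_lintegral_mul_lintegral {K K₁ : M → ℝ} {K₂ : M → M → ℝ}
    (hK₁ : Measurable K₁) (hK₂ : Measurable (uncurry K₂))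
    (hK : ∀ᵐ y ∂μ,
      ENNReal.ofReal (K y) = ∫⁻ z, ENNReal.ofReal (K₁ z) * ENNReal.ofReal (K₂ z y) ∂μ) :
    ∫⁻ y, ENNReal.ofReal (K y) ∂μ =
      ∫⁻ z, ENNReal.ofReal (K₁ z) * ∫⁻ y, ENNReal.ofReal (K₂ z y) ∂μ ∂μ := by
  rw [lintegral_congr_ae hK, ← lintegral_lintegral_swap]
  · exact lintegral_congr fun z => lintegral_const_mul _ hK₂.of_uncurry_left.ennreal_ofReal
  · exact ((hK₁.comp measurable_fst).ennreal_ofReal.mul hK₂.ennreal_ofReal).aemeasurable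

theorem lintegral_lintegral_ofReal_mul_of_eigen {k : M → M → ℝ} (hk_nonneg : ∀ x y, 0 ≤ k x y)
    (hk : Measurable (uncurry k)) (hrow : ∀ᵐ x ∂μ, Integrable (k x) μ) {f : M → ℝ}
    (hf : Measurable f) (hf_bdd : ∃ C, ∀ x, |f x| ≤ C) (hf_nonneg : 0 ≤ᵐ[μ] f) {c : ℝ}
    (hc : 0 ≤ c) (hf_eig : ∀ x, ∫ z, k x z * f z ∂μ = c * f x) :
    ∫⁻ z, (∫⁻ x, ENNReal.ofReal (k x z) ∂μ) * ENNReal.ofReal (f z) ∂μ =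
      ENNReal.ofReal c * ∫⁻ x, ENNReal.ofReal (f x) ∂μ := by
  obtain ⟨C, hC⟩ := hf_bdd
  calc ∫⁻ z, (∫⁻ x, ENNReal.ofReal (k x z) ∂μ) * ENNReal.ofReal (f z) ∂μ
      = ∫⁻ z, ∫⁻ x, ENNReal.ofReal (k x z) * ENNReal.ofReal (f z) ∂μ ∂μ :=
        lintegral_congr fun z => (lintegral_mul_const _ hk.of_uncurry_right.ennreal_ofReal).symm
    _ = ∫⁻ x, ∫⁻ z, ENNReal.ofReal (k x z) * ENNReal.ofReal (f z) ∂μ ∂μ :=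
        (lintegral_lintegral_swap
          (hk.ennreal_ofReal.mul (hf.comp measurable_snd).ennreal_ofReal).aemeasurable).symm
    _ = ∫⁻ x, ENNReal.ofReal (c * f x) ∂μ := by
        refine lintegral_congr_ae ?_
        filter_upwards [hrow] with x hx
        rw [← hf_eig x]
        exact (ofReal_integral_mul_eq_lintegral (Eventually.of_forall (hk_nonneg x)) hf_nonneg
          (hx.mul_bdd hf.aestronglyMeasurable (Eventually.of_forall hC))).symm
    _ = ENNReal.ofReal c * ∫⁻ x, ENNReal.ofReal (f x) ∂μ := by
        simpa using lintegral_mul_ofReal_const_mul (ν := μ) (fun _ => 1) f hc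

theorem lintegral_prod_mul_ofReal_mul {g h : M → ℝ≥0∞} (hg : Measurable g) (hh : Measurable h)
    {c : ℝ} (hc : 0 ≤ c) {f₁ f₂ : M → ℝ} (hf₁ : Measurable f₁) (hf₂ : Measurable f₂)
    (hf₁_nonneg : 0 ≤ᵐ[μ] f₁) :
    ∫⁻ q, g q.1 * h q.2 * ENNReal.ofReal (c * (f₁ q.1 * f₂ q.2)) ∂μ.prod μ =
      ENNReal.ofReal c * ((∫⁻ z, g z * ENNReal.ofReal (f₁ z) ∂μ) *
        ∫⁻ w, h w * ENNReal.ofReal (f₂ w) ∂μ) := by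
  have hgf₁ : Measurable fun z => g z * ENNReal.ofReal (f₁ z) := hg.mul hf₁.ennreal_ofReal
  have hhf₂ : Measurable fun w => h w * ENNReal.ofReal (f₂ w) := hh.mul hf₂.ennreal_ofReal
  rw [← lintegral_prod_mul hgf₁.aemeasurable hhf₂.aemeasurable,
    ← lintegral_const_mul' _ _ ENNReal.ofReal_ne_top]
  refine lintegral_congr_ae ?_
  filter_upwards [Measure.quasiMeasurePreserving_fst.ae hf₁_nonneg] with q hq
  rw [ENNReal.ofReal_mul hc, ENNReal.ofReal_mul hq]
  ring

end Kernel

section Semigroup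

variable [MeasurableSpace M] {μ : Measure M} [SFinite μ] {u : ℝ → M → M → ℝ}

theorem ae_integrable_of_heatContent_ne_top {t : ℝ} (hu_nonneg : ∀ x y, 0 ≤ u t x y)
    (hu_meas : Measurable (uncurry (u t))) (hfin : heatContent μ u t ≠ ⊤) :
    (∀ᵐ x ∂μ, Integrable (u t x) μ) ∧ ∀ᵐ y ∂μ, Integrable (fun x => u t x y) μ :=
  ⟨ae_integrable_of_lintegral_lintegral_ne_top hu_nonneg hu_meas hfin,
    ae_integrable_of_lintegral_lintegral_ne_top (k := fun y x => u t x y) (fun y x => hu_nonneg x y)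
      (hu_meas.comp measurable_swap) (by rwa [lintegral_lintegral_ofReal_swap hu_meas])⟩

theorem ae_lintegral_ofReal_add_eq (hu_nonneg : ∀ t, 0 < t → ∀ x y, 0 ≤ u t x y)
    (hu_meas : ∀ t, 0 < t → Measurable (uncurry (u t)))
    (hCK : ∀ s t : ℝ, 0 < s → 0 < t → ∀ x y, u (s + t) x y = ∫ z, u s x z * u t z y ∂μ)
    {s t : ℝ} (hs : 0 < s) (ht : 0 < t)
    (hint : ∀ᵐ x ∂μ, ∀ᵐ y ∂μ, Integrable (fun z => u s x z * u t z y) μ) :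
    ∀ᵐ x ∂μ, ∫⁻ y, ENNReal.ofReal (u (s + t) x y) ∂μ =
      ∫⁻ z, ENNReal.ofReal (u s x z) * ∫⁻ y, ENNReal.ofReal (u t z y) ∂μ ∂μ := by
  filter_upwards [hint] with x hx
  refine lintegral_ofReal_eq_lintegral_mul_lintegral (hu_meas s hs).of_uncurry_left
    (hu_meas t ht) ?_
  filter_upwards [hx] with y hy
  rw [hCK s t hs ht x y]
  exact ofReal_integral_mul_eq_lintegral (Eventually.of_forall (hu_nonneg s hs x))
    (Eventually.of_forall fun z => hu_nonneg t ht z y) hy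

theorem heatContent_add_add_eq_lintegral_prod (hu_nonneg : ∀ t, 0 < t → ∀ x y, 0 ≤ u t x y)
    (hu_meas : ∀ t, 0 < t → Measurable (uncurry (u t)))
    (hCK : ∀ s t : ℝ, 0 < s → 0 < t → ∀ x y, u (s + t) x y = ∫ z, u s x z * u t z y ∂μ)
    {a s b : ℝ} (ha : 0 < a) (hs : 0 < s) (hb : 0 < b)
    (hrow : ∀ᵐ x ∂μ, Integrable (u a x) μ) (hcol : ∀ᵐ y ∂μ, Integrable (fun w => u b w y) μ)
    {B B' : ℝ} (hs_bdd : ∀ᵐ q ∂μ.prod μ, u s q.1 q.2 ≤ B)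
    (hsb_bdd : ∀ᵐ q ∂μ.prod μ, u (s + b) q.1 q.2 ≤ B') :
    heatContent μ u (a + (s + b)) =
      ∫⁻ q, (∫⁻ x, ENNReal.ofReal (u a x q.1) ∂μ) * (∫⁻ y, ENNReal.ofReal (u b q.2 y) ∂μ) *
        ENNReal.ofReal (u s q.1 q.2) ∂μ.prod μ := by
  have hsb_pos := add_pos hs hb
  have hsb := ae_lintegral_ofReal_add_eq hu_nonneg hu_meas hCK hs hb <| by
    filter_upwards [Measure.ae_ae_of_ae_prod hs_bdd] with z hz
    filter_upwards [hcol] with y hy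
    refine hy.bdd_mul (c := B) (hu_meas s hs).of_uncurry_left.aestronglyMeasurable
      (hz.mono fun w hw => ?_)
    rwa [Real.norm_of_nonneg (hu_nonneg s hs z w)]
  have hasb := ae_lintegral_ofReal_add_eq hu_nonneg hu_meas hCK ha hsb_pos <| by
    have hset : MeasurableSet {q : M × M | u (s + b) q.1 q.2 ≤ B'} :=
      measurableSet_le (hu_meas _ hsb_pos) measurable_const
    filter_upwards [hrow] with x hx
    filter_upwards [(Measure.ae_ae_comm hset).mp (Measure.ae_ae_of_ae_prod hsb_bdd)] with y hy
    refine hx.mul_bdd (c := B') (hu_meas _ hsb_pos).of_uncurry_right.aestronglyMeasurable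
      (hy.mono fun z hz => ?_)
    rwa [Real.norm_of_nonneg (hu_nonneg _ hsb_pos z y)]
  have hrow_s : Measurable fun z => ∫⁻ y, ENNReal.ofReal (u (s + b) z y) ∂μ :=
    measurable_lintegral_ofReal_right (hu_meas _ hsb_pos)
  have hcol_a : Measurable fun z => ∫⁻ x, ENNReal.ofReal (u a x z) ∂μ :=
    measurable_lintegral_ofReal_left (hu_meas a ha)
  have hrow_b : Measurable fun w => ∫⁻ y, ENNReal.ofReal (u b w y) ∂μ :=
    measurable_lintegral_ofReal_right (hu_meas b hb)
  calc heatContent μ u (a + (s + b))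
      = ∫⁻ x, ∫⁻ z, ENNReal.ofReal (u a x z) * ∫⁻ y, ENNReal.ofReal (u (s + b) z y) ∂μ ∂μ ∂μ :=
        lintegral_congr_ae hasb
    _ = ∫⁻ z, (∫⁻ x, ENNReal.ofReal (u a x z) ∂μ) * ∫⁻ y, ENNReal.ofReal (u (s + b) z y) ∂μ ∂μ := by
        rw [lintegral_lintegral_swap
          ((hu_meas a ha).ennreal_ofReal.mul (hrow_s.comp measurable_snd)).aemeasurable]
        exact lintegral_congr fun z =>
          lintegral_mul_const _ (hu_meas a ha).of_uncurry_right.ennreal_ofReal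
    _ = ∫⁻ z, (∫⁻ x, ENNReal.ofReal (u a x z) ∂μ) *
          ∫⁻ w, ENNReal.ofReal (u s z w) * ∫⁻ y, ENNReal.ofReal (u b w y) ∂μ ∂μ ∂μ :=
        lintegral_congr_ae (hsb.mono fun z hz => congrArg _ hz)
    _ = ∫⁻ z, ∫⁻ w, (∫⁻ x, ENNReal.ofReal (u a x z) ∂μ) * (∫⁻ y, ENNReal.ofReal (u b w y) ∂μ) *
          ENNReal.ofReal (u s z w) ∂μ ∂μ := by
        refine lintegral_congr fun z => ?_
        have hmeas : Measurable fun w =>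
            ENNReal.ofReal (u s z w) * ∫⁻ y, ENNReal.ofReal (u b w y) ∂μ :=
          (hu_meas s hs).of_uncurry_left.ennreal_ofReal.mul hrow_b
        rw [← lintegral_const_mul _ hmeas]
        exact lintegral_congr fun w => by ring
    _ = _ := (lintegral_prod _ (((hcol_a.comp measurable_fst).mul (hrow_b.comp measurable_snd)).mul
          (hu_meas s hs).ennreal_ofReal).aemeasurable).symm

theorem integral_Uop_one_eq_toReal_heatContent {t : ℝ} (hu_nonneg : ∀ x y, 0 ≤ u t x y)
    (hu_meas : Measurable (uncurry (u t))) (hfin : heatContent μ u t ≠ ⊤) :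
    ∫ x, Uop μ u t (fun _ => (1 : ℝ)) x ∂μ = (heatContent μ u t).toReal := by
  have hrow : Measurable fun x => ∫⁻ y, ENNReal.ofReal (u t x y) ∂μ :=
    measurable_lintegral_ofReal_right hu_meas
  rw [heatContent, ← integral_toReal hrow.aemeasurable (ae_lt_top hrow hfin)]
  refine integral_congr_ae (Eventually.of_forall fun x => ?_)
  simp only [Uop, mul_one]
  exact integral_eq_lintegral_of_nonneg_ae (Eventually.of_forall (hu_nonneg x))
    hu_meas.of_uncurry_left.aestronglyMeasurable

theorem lintegral_prod_mass_mul_mass {a : ℝ} (hu_meas : Measurable (uncurry (u a))) :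
    ∫⁻ q, (∫⁻ x, ENNReal.ofReal (u a x q.1) ∂μ) * ∫⁻ y, ENNReal.ofReal (u a q.2 y) ∂μ ∂μ.prod μ =
      heatContent μ u a * heatContent μ u a := by
  rw [lintegral_prod_mul (measurable_lintegral_ofReal_left hu_meas).aemeasurable
    (measurable_lintegral_ofReal_right hu_meas).aemeasurable,
    lintegral_lintegral_ofReal_swap hu_meas]
  rfl

theorem lintegral_prod_mass_mul_ofReal_eigen {a : ℝ} (hu_nonneg : ∀ x y, 0 ≤ u a x y)
    (hu_meas : Measurable (uncurry (u a))) (hfin : heatContent μ u a ≠ ⊤) {lam : ℝ}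
    {phi psi : M → ℝ} (hphi : Measurable phi) (hphi_bdd : ∃ C, ∀ x, |phi x| ≤ C)
    (hphi_nonneg : 0 ≤ᵐ[μ] phi) (hpsi : Measurable psi) (hpsi_bdd : ∃ C, ∀ x, |psi x| ≤ C)
    (hpsi_nonneg : 0 ≤ᵐ[μ] psi) (hphi_eig : ∀ x, Uop μ u a phi x = exp (-(lam * a)) * phi x)
    (hpsi_eig : ∀ y, Ustar μ u a psi y = exp (-(lam * a)) * psi y) {c : ℝ} (hc : 0 ≤ c) :
    ∫⁻ q, (∫⁻ x, ENNReal.ofReal (u a x q.1) ∂μ) * (∫⁻ y, ENNReal.ofReal (u a q.2 y) ∂μ) *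
        ENNReal.ofReal (c * (phi q.1 * psi q.2)) ∂μ.prod μ =
      ENNReal.ofReal c * ((ENNReal.ofReal (exp (-(lam * a))) * ∫⁻ x, ENNReal.ofReal (phi x) ∂μ) *
        (ENNReal.ofReal (exp (-(lam * a))) * ∫⁻ x, ENNReal.ofReal (psi x) ∂μ)) := by
  obtain ⟨hrow, hcol⟩ := ae_integrable_of_heatContent_ne_top hu_nonneg hu_meas hfin
  rw [lintegral_prod_mul_ofReal_mul (measurable_lintegral_ofReal_left hu_meas)
    (measurable_lintegral_ofReal_right hu_meas) hc hphi hpsi hphi_nonneg,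
    lintegral_lintegral_ofReal_mul_of_eigen hu_nonneg hu_meas hrow hphi hphi_bdd hphi_nonneg
      (exp_pos _).le hphi_eig,
    lintegral_lintegral_ofReal_mul_of_eigen (k := fun y w => u a w y) (fun y w => hu_nonneg w y)
      (hu_meas.comp measurable_swap) hcol hpsi hpsi_bdd hpsi_nonneg (exp_pos _).le hpsi_eig]

theorem abs_exp_mul_toReal_heatContent_sub_le (hu_nonneg : ∀ t, 0 < t → ∀ x y, 0 ≤ u t x y)
    (hu_meas : ∀ t, 0 < t → Measurable (uncurry (u t)))
    (hCK : ∀ s t : ℝ, 0 < s → 0 < t → ∀ x y, u (s + t) x y = ∫ z, u s x z * u t z y ∂μ)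
    {a s : ℝ} (ha : 0 < a) (hs : 0 < s) (hfin : heatContent μ u a ≠ ⊤) {B B' : ℝ}
    (hs_bdd : ∀ᵐ q ∂μ.prod μ, u s q.1 q.2 ≤ B) (hsa_bdd : ∀ᵐ q ∂μ.prod μ, u (s + a) q.1 q.2 ≤ B')
    {lam : ℝ} {phi psi : M → ℝ} (hphi : Measurable phi) (hphi_bdd : ∃ C, ∀ x, |phi x| ≤ C)
    (hphi_nonneg : 0 ≤ᵐ[μ] phi) (hpsi : Measurable psi) (hpsi_bdd : ∃ C, ∀ x, |psi x| ≤ C)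
    (hpsi_nonneg : 0 ≤ᵐ[μ] psi) (hphi_eig : ∀ x, Uop μ u a phi x = exp (-(lam * a)) * phi x)
    (hpsi_eig : ∀ y, Ustar μ u a psi y = exp (-(lam * a)) * psi y) {c e : ℝ} (hc : 0 ≤ c)
    (he : 0 ≤ e)
    (hgap : ∀ᵐ q ∂μ.prod μ, |exp (lam * s) * u s q.1 q.2 - c * (phi q.1 * psi q.2)| ≤ e) :
    heatContent μ u (a + (s + a)) ≠ ⊤ ∧
      |exp (lam * s) * (heatContent μ u (a + (s + a))).toReal -
          c * (exp (-(lam * a)) * (∫⁻ x, ENNReal.ofReal (phi x) ∂μ).toReal *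
            (exp (-(lam * a)) * (∫⁻ x, ENNReal.ofReal (psi x) ∂μ).toReal))| ≤
        e * ((heatContent μ u a).toReal * (heatContent μ u a).toReal) := by
  have hG : Measurable fun q : M × M =>
      (∫⁻ x, ENNReal.ofReal (u a x q.1) ∂μ) * ∫⁻ y, ENNReal.ofReal (u a q.2 y) ∂μ :=
    ((measurable_lintegral_ofReal_left (hu_meas a ha)).comp measurable_fst).mul
      ((measurable_lintegral_ofReal_right (hu_meas a ha)).comp measurable_snd)
  obtain ⟨Bb, hBb⟩ := exists_mul_mul_le hphi_bdd hpsi_bdd hc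
  obtain ⟨hfin', hest⟩ := abs_toReal_lintegral_mul_ofReal_sub_le hG
    (by rw [lintegral_prod_mass_mul_mass (hu_meas a ha)]; finiteness) he
    (Eventually.of_forall hBb) hgap
  rw [lintegral_mul_ofReal_const_mul _ _ (exp_pos _).le,
    ← heatContent_add_add_eq_lintegral_prod hu_nonneg hu_meas hCK ha hs ha
      (ae_integrable_of_heatContent_ne_top (hu_nonneg a ha) (hu_meas a ha) hfin).1
      (ae_integrable_of_heatContent_ne_top (hu_nonneg a ha) (hu_meas a ha) hfin).2
      hs_bdd hsa_bdd] at hfin' hest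
  rw [lintegral_prod_mass_mul_ofReal_eigen (hu_nonneg a ha) (hu_meas a ha) hfin hphi hphi_bdd
    hphi_nonneg hpsi hpsi_bdd hpsi_nonneg hphi_eig hpsi_eig hc,
    lintegral_prod_mass_mul_mass (hu_meas a ha)] at hest
  refine ⟨fun htop => hfin' ?_, ?_⟩
  · rw [htop, ENNReal.mul_top (ENNReal.ofReal_pos.mpr (exp_pos _)).ne']
  · simpa only [ENNReal.toReal_mul, ENNReal.toReal_ofReal (exp_pos _).le,
      ENNReal.toReal_ofReal hc] using hest

end Semigroup

theorem statement17_general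
    [TopologicalSpace M]
    [MeasurableSpace M] [BorelSpace M]
    (μ : Measure M) [SigmaFinite μ]
    (u : ℝ → M → M → ℝ)
    (hu_nonneg : ∀ t, 0 < t → ∀ x y, 0 ≤ u t x y)
    (hu_meas : ∀ t, 0 < t → Measurable (Function.uncurry (u t)))
    (hCK : ∀ s t : ℝ, 0 < s → 0 < t → ∀ x y,
      u (s + t) x y = ∫ z, u s x z * u t z y ∂μ)
    (t₀ : ℝ) (ht₀ : 0 < t₀)
    (lam : ℝ) (phi psi : M → ℝ)
    (hphi_cont : Continuous phi) (hphi_bdd : ∃ C, ∀ x, |phi x| ≤ C)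
    (hphi_pos : ∀ᵐ x ∂μ, 0 < phi x)
    (hpsi_cont : Continuous psi) (hpsi_bdd : ∃ C, ∀ x, |psi x| ≤ C)
    (hpsi_pos : ∀ᵐ x ∂μ, 0 < psi x)
    (hphi_eig : ∀ t, 0 < t → ∀ x, Uop μ u t phi x = Real.exp (-(lam * t)) * phi x)
    (hpsi_eig : ∀ t, 0 < t → ∀ y, Ustar μ u t psi y = Real.exp (-(lam * t)) * psi y)
    (hLam_pos : 0 < ∫ x, phi x * psi x ∂μ)
    (C₀ γ : ℝ) (hC₀ : 0 < C₀)
    (hgap : ∀ t, 2 * t₀ < t → ∀ᵐ q ∂(μ.prod μ),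
      |Real.exp (lam * t) * u t q.1 q.2 -
        (∫ x, phi x * psi x ∂μ)⁻¹ * (phi q.1 * psi q.2)| ≤ C₀ * Real.exp (-(γ * t)))
    (t₁ : ℝ) (ht₁ : t₀ ≤ t₁)
    (hZ : heatContent μ u t₁ < ⊤) :
    ∃ C : ℝ, 0 < C ∧
      ∀ t, 6 * t₁ < t →
        |Real.exp (lam * t) * (∫ x, Uop μ u t (fun _ => (1 : ℝ)) x ∂μ) -
            (∫ x, |phi x| ∂μ) * (∫ x, |psi x| ∂μ) / (∫ x, phi x * psi x ∂μ)| ≤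
          C * Real.exp (-(γ * t)) := by
  have ht₁_pos : 0 < t₁ := ht₀.trans_le ht₁
  have hphi_nonneg : 0 ≤ᵐ[μ] phi := hphi_pos.mono fun _ => le_of_lt
  have hpsi_nonneg : 0 ≤ᵐ[μ] psi := hpsi_pos.mono fun _ => le_of_lt
  obtain ⟨B, hB⟩ := exists_mul_mul_le hphi_bdd hpsi_bdd (inv_nonneg.mpr hLam_pos.le)
  have hu_bdd := fun τ hτ => ae_le_of_abs_mul_sub_le (exp_pos (lam * τ)) hB (hgap τ hτ)
  refine ⟨C₀ * (heatContent μ u t₁).toReal ^ 2 * exp (2 * (lam + γ) * t₁) + 1, by positivity, ?_⟩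
  intro t ht
  obtain ⟨s, rfl⟩ : ∃ s, t = t₁ + (s + t₁) := ⟨t - 2 * t₁, by ring⟩
  have hs : 2 * t₀ < s := by linarith
  obtain ⟨hfin, hest⟩ := abs_exp_mul_toReal_heatContent_sub_le hu_nonneg hu_meas hCK ht₁_pos
    (by linarith) hZ.ne (hu_bdd s hs) (hu_bdd (s + t₁) (by linarith)) hphi_cont.measurable
    hphi_bdd hphi_nonneg hpsi_cont.measurable hpsi_bdd hpsi_nonneg (hphi_eig t₁ ht₁_pos)
    (hpsi_eig t₁ ht₁_pos) (inv_nonneg.mpr hLam_pos.le) (by positivity) (hgap s hs)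
  rw [integral_Uop_one_eq_toReal_heatContent (hu_nonneg _ (by linarith)) (hu_meas _ (by linarith))
    hfin, integral_abs_eq_toReal_lintegral_ofReal hphi_cont.measurable hphi_nonneg,
    integral_abs_eq_toReal_lintegral_ofReal hpsi_cont.measurable hpsi_nonneg]
  refine (abs_exp_mul_sub_div_le hLam_pos.ne' hest).trans ?_
  gcongr
  linarith

/-- Heat-content asymptotics:
`|e^(λ₀ t) Z(t) - ‖φ₀‖₁ ‖ψ₀‖₁ / Λ| ≤ C e^(-γ t)` for `t > 6t₁`. -/
theorem statement17
    [TopologicalSpace M] [PolishSpace M] [LocallyCompactSpace M]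
    [MeasurableSpace M] [BorelSpace M]
    (μ : Measure M) [IsLocallyFiniteMeasure μ] [Measure.IsOpenPosMeasure μ] [SigmaFinite μ]
    (u : ℝ → M → M → ℝ)
    (hu_nonneg : ∀ t, 0 < t → ∀ x y, 0 ≤ u t x y)
    (hu_meas : ∀ t, 0 < t → Measurable (Function.uncurry (u t)))
    (hCK : ∀ s t : ℝ, 0 < s → 0 < t → ∀ x y,
      u (s + t) x y = ∫ z, u s x z * u t z y ∂μ)
    (t₀ : ℝ) (ht₀ : 0 < t₀)
    (hA2 : ∀ t, 0 < t → ∀ f : M → ℝ, Measurable f → (∃ C, ∀ x, |f x| ≤ C) →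
      Continuous (Uop μ u t f) ∧ (∃ C, ∀ x, |Uop μ u t f x| ≤ C) ∧
      Continuous (Ustar μ u t f) ∧ (∃ C, ∀ x, |Ustar μ u t f x| ≤ C))
    (hA3 : (∃ C, ∀ᵐ x ∂μ, ∫ y, (u t₀ x y) ^ 2 ∂μ ≤ C) ∧
      (∃ C, ∀ᵐ y ∂μ, ∫ x, (u t₀ x y) ^ 2 ∂μ ≤ C))
    (lam : ℝ) (phi psi : M → ℝ)
    (hphi_cont : Continuous phi) (hphi_bdd : ∃ C, ∀ x, |phi x| ≤ C)
    (hphi_L2 : MemLp phi 2 μ) (hphi_pos : ∀ᵐ x ∂μ, 0 < phi x)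
    (hpsi_cont : Continuous psi) (hpsi_bdd : ∃ C, ∀ x, |psi x| ≤ C)
    (hpsi_L2 : MemLp psi 2 μ) (hpsi_pos : ∀ᵐ x ∂μ, 0 < psi x)
    (hphi_eig : ∀ t, 0 < t → ∀ x, Uop μ u t phi x = Real.exp (-(lam * t)) * phi x)
    (hpsi_eig : ∀ t, 0 < t → ∀ y, Ustar μ u t psi y = Real.exp (-(lam * t)) * psi y)
    (hLam_int : Integrable (fun x => phi x * psi x) μ)
    (hLam_pos : 0 < ∫ x, phi x * psi x ∂μ)
    (C₀ γ : ℝ) (hC₀ : 0 < C₀) (hγ : 0 < γ)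
    (hgap : ∀ t, 2 * t₀ < t → ∀ᵐ q ∂(μ.prod μ),
      |Real.exp (lam * t) * u t q.1 q.2 -
        (∫ x, phi x * psi x ∂μ)⁻¹ * (phi q.1 * psi q.2)| ≤ C₀ * Real.exp (-(γ * t)))
    (t₁ : ℝ) (ht₁ : t₀ ≤ t₁)
    (hZ : heatContent μ u t₁ < ⊤) :
    ∃ C : ℝ, 0 < C ∧
      ∀ t, 6 * t₁ < t →
        |Real.exp (lam * t) * (∫ x, Uop μ u t (fun _ => (1 : ℝ)) x ∂μ) -
            (∫ x, |phi x| ∂μ) * (∫ x, |psi x| ∂μ) / (∫ x, phi x * psi x ∂μ)| ≤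
          C * Real.exp (-(γ * t)) :=
  statement17_general μ u hu_nonneg hu_meas hCK t₀ ht₀ lam phi psi hphi_cont hphi_bdd hphi_pos
    hpsi_cont hpsi_bdd hpsi_pos hphi_eig hpsi_eig hLam_pos C₀ γ hC₀ hgap t₁ ht₁ hZ
end
end
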